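/- Let X ⊆ Z^3 be a finite lattice-convex set with dim(X) ≥ 2. Then every polyhedron P ⊆ R^3 with P ∩ Z^3 = X is bounded. -/

import Mathlib

/-- Coercion of an integer point to a real point. -/
def ZtoR {d : ℕ} (x : Fin d → ℤ) : Fin d → ℝ := fun i => (x i : ℝ)

/-- `X ⊆ ℤ^d` is lattice-convex if `conv(X) ∩ ℤ^d = X`. -/
def IsLatticeConvex {d : ℕ} (X : Set (Fin d → ℤ)) : Prop :=
  ∀ z : Fin d → ℤ, ZtoR z ∈ convexHull ℝ (ZtoR '' X) → z ∈ X

/-- `X` is described within `ℤ^d` by a system of `k` real linear inequalities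
(together with finitely many linear equations). -/
def IsRelaxation {d : ℕ} (X : Set (Fin d → ℤ)) (k : ℕ) : Prop :=
  ∃ (m : ℕ) (A : Fin k → Fin d → ℝ) (b : Fin k → ℝ) (U : Fin m → Fin d → ℝ) (v : Fin m → ℝ),
    X = {x : Fin d → ℤ |
      (∀ i, ∑ j, A i j * (x j : ℝ) ≤ b i) ∧ ∀ i, ∑ j, U i j * (x j : ℝ) = v i}

/-- The relaxation complexity of `X` within `ℤ^d`. -/
noncomputable def rc {d : ℕ} (X : Set (Fin d → ℤ)) : ℕ := sInf {k | IsRelaxation X k}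

/-- `X` is described within `ℤ^d` by a system of `k` rational linear inequalities
(together with finitely many rational linear equations). -/
def IsRelaxationQ {d : ℕ} (X : Set (Fin d → ℤ)) (k : ℕ) : Prop :=
  ∃ (m : ℕ) (A : Fin k → Fin d → ℚ) (b : Fin k → ℚ) (U : Fin m → Fin d → ℚ) (v : Fin m → ℚ),
    X = {x : Fin d → ℤ |
      (∀ i, ∑ j, A i j * (x j : ℚ) ≤ b i) ∧ ∀ i, ∑ j, U i j * (x j : ℚ) = v i}

/-- The rational relaxation complexity of `X` within `ℤ^d`. -/
noncomputable def rcQ {d : ℕ} (X : Set (Fin d → ℤ)) : ℕ := sInf {k | IsRelaxationQ X k}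

/-- The dimension of `X`, i.e. the dimension of its affine hull. -/
noncomputable def dimX {d : ℕ} (X : Set (Fin d → ℤ)) : ℕ :=
  Module.finrank ℝ (affineSpan ℝ (ZtoR '' X)).direction

/-- A polyhedron is the solution set of finitely many linear inequalities. -/
def IsPolyhedron {d : ℕ} (P : Set (Fin d → ℝ)) : Prop :=
  ∃ (k : ℕ) (A : Fin k → Fin d → ℝ) (b : Fin k → ℝ),
    P = {x | ∀ i, ∑ j, A i j * x j ≤ b i}

/-!
An unbounded polyhedron `P` has a recession direction `r`, and `X` contains integer points
`p₀, p₁, p₂` spanning a plane. After rescaling, `r = α (p₁ - p₀) + β (p₂ - p₀) + q` with `q` an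
integer vector (`q = 0` if `r` is parallel to the plane, otherwise an integer vector on the side
of the plane towards which `r` points). The integer point
`p₀ + ⌈nα⌉ (p₁ - p₀) + ⌈nβ⌉ (p₂ - p₀) + n q` is `n r` plus a point of the triangle `p₀ p₁ p₂`
as soon as the ceiling defects of `nα` and `nβ` sum to at most `1`, which by simultaneous
Dirichlet approximation happens for arbitrarily large `n`. So `P ∩ ℤ³` is infinite.
-/

open Filter Topology Module

theorem exists_nat_ge_abs_mul_sub_intCast_le {ι : Type*} [Fintype ι] (α : ι → ℝ) {ε : ℝ}
    (hε : 0 < ε) (M : ℕ) : ∃ k : ℕ, M ≤ k ∧ ∀ i, ∃ v : ℤ, |k * α i - v| ≤ ε := by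
  set g : ℕ → ι → ℝ := fun n i => Int.fract (n * α i)
  have hg : ∀ n, g n ∈ Set.Icc 0 1 := fun n =>
    ⟨fun i => Int.fract_nonneg _, fun i => (Int.fract_lt_one _).le⟩
  obtain ⟨L, -, φ, hφ, hlim⟩ := isCompact_Icc.tendsto_subseq hg
  obtain ⟨a, ha⟩ := (Metric.tendsto_atTop.mp hlim) (ε / 2) (half_pos hε)
  set b := φ a + M
  have hφa : a ≤ φ a := hφ.id_le a
  have hφb : b ≤ φ b := hφ.id_le b
  have hdist : dist (g (φ b)) (g (φ a)) < ε := by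
    have h₁ : dist (g (φ b)) L < ε / 2 := ha b (by omega)
    have h₂ : dist (g (φ a)) L < ε / 2 := ha a le_rfl
    linarith [dist_triangle_right (g (φ b)) (g (φ a)) L]
  refine ⟨φ b - φ a, by omega, fun i => ⟨⌊φ b * α i⌋ - ⌊φ a * α i⌋, ?_⟩⟩
  have hsub : ((φ b - φ a : ℕ) : ℝ) * α i - ((⌊φ b * α i⌋ - ⌊φ a * α i⌋ : ℤ) : ℝ)
      = g (φ b) i - g (φ a) i := by
    simp only [g, Int.fract]
    push_cast [Nat.cast_sub (by omega : φ a ≤ φ b)]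
    ring
  rw [hsub, ← Real.dist_eq]
  exact (dist_le_pi_dist _ _ i).trans hdist.le

theorem ceil_sub_self_intCast_add_sub (y δ : ℝ) (v : ℤ) (h₁ : -(⌈y⌉ - y) < δ)
    (h₂ : δ ≤ 1 - (⌈y⌉ - y)) : ⌈v + δ - y⌉ - (v + δ - y) = 1 - (⌈y⌉ - y) - δ := by
  have : ⌈v + δ - y⌉ = v + 1 - ⌈y⌉ := by
    rw [Int.ceil_eq_iff]
    push_cast
    constructor <;> linarith
  rw [this]
  push_cast
  ring

theorem exists_nat_ge_ceil_sub_add_ceil_sub_le_one (α β : ℝ) (N : ℕ) :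
    ∃ n : ℕ, N ≤ n ∧ (⌈n * α⌉ - n * α) + (⌈n * β⌉ - n * β) ≤ 1 := by
  set A := ⌈N * α⌉ - N * α
  set B := ⌈N * β⌉ - N * β
  by_cases hAB : A + B ≤ 1
  · exact ⟨N, le_rfl, hAB⟩
  -- Otherwise take `k` with `kα`, `kβ` almost integers: the defects at `k - N` are then
  -- almost `1 - A` and `1 - B`.
  have hA : A < 1 := by linarith [Int.ceil_lt_add_one (N * α)]
  have hB : B < 1 := by linarith [Int.ceil_lt_add_one (N * β)]
  set ε := min (min (1 - A) (1 - B)) ((A + B - 1) / 2)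
  have hε : 0 < ε := lt_min (lt_min (by linarith) (by linarith)) (by linarith)
  have hεA : ε ≤ 1 - A := (min_le_left _ _).trans (min_le_left _ _)
  have hεB : ε ≤ 1 - B := (min_le_left _ _).trans (min_le_right _ _)
  have hεAB : ε ≤ (A + B - 1) / 2 := min_le_right _ _
  obtain ⟨k, hk, hkv⟩ := exists_nat_ge_abs_mul_sub_intCast_le ![α, β] hε (2 * N)
  obtain ⟨v, hv⟩ := hkv 0
  obtain ⟨w, hw⟩ := hkv 1
  simp only [Matrix.cons_val_zero, Matrix.cons_val_one] at hv hw
  obtain ⟨hv₁, hv₂⟩ := abs_le.mp hv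
  obtain ⟨hw₁, hw₂⟩ := abs_le.mp hw
  refine ⟨k - N, by omega, ?_⟩
  have hcast : ((k - N : ℕ) : ℝ) = k - N := by push_cast [Nat.cast_sub (by omega : N ≤ k)]; ring
  have hα : ((k - N : ℕ) : ℝ) * α = v + (k * α - v) - N * α := by rw [hcast]; ring
  have hβ : ((k - N : ℕ) : ℝ) * β = w + (k * β - w) - N * β := by rw [hcast]; ring
  rw [hα, hβ, ceil_sub_self_intCast_add_sub _ _ _ (by linarith) (by linarith),
    ceil_sub_self_intCast_add_sub _ _ _ (by linarith) (by linarith)]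
  linarith

theorem exists_recession_dir_of_not_isBounded {E : Type*} [NormedAddCommGroup E]
    [NormedSpace ℝ E] [ProperSpace E]
    {P : Set E} (hPc : IsClosed P) (hPconv : Convex ℝ P) (hPb : ¬ Bornology.IsBounded P) :
    ∃ r ≠ 0, ∀ x ∈ P, ∀ t : ℝ, 0 ≤ t → x + t • r ∈ P := by
  obtain ⟨x, hxP, hx⟩ : ∃ x : ℕ → E, (∀ n, x n ∈ P) ∧ ∀ n : ℕ, (n : ℝ) < ‖x n‖ := by
    simp only [isBounded_iff_forall_norm_le, not_exists, not_forall, not_le] at hPb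
    choose x hxP hx using fun n : ℕ => hPb n
    exact ⟨x, hxP, hx⟩
  have hpos : ∀ n, 0 < ‖x n‖ := fun n => (Nat.cast_nonneg n).trans_lt (hx n)
  have hsphere : ∀ n, ‖x n‖⁻¹ • x n ∈ Metric.sphere (0 : E) 1 := fun n => by
    simp [norm_smul, (hpos n).ne']
  obtain ⟨r, hr, φ, hφ, hlim⟩ := (isCompact_sphere (0 : E) 1).tendsto_subseq hsphere
  refine ⟨r, by rintro rfl; simp at hr, fun p hp t ht => ?_⟩
  have hnorm : Tendsto (fun m => ‖x (φ m)‖) atTop atTop :=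
    tendsto_atTop_mono (fun n => (hx n).le) tendsto_natCast_atTop_atTop |>.comp hφ.tendsto_atTop
  have hseg : Tendsto (fun m => p + (t / ‖x (φ m)‖) • (x (φ m) - p)) atTop (𝓝 (p + t • r)) := by
    have h := (tendsto_const_nhds (x := p)).add ((hlim.const_smul t).sub
      ((tendsto_inv_atTop_zero.comp hnorm).const_mul t |>.smul_const p))
    rw [mul_zero, zero_smul, sub_zero] at h
    refine h.congr fun m => ?_
    simp only [Function.comp_apply, smul_sub, smul_smul, div_eq_mul_inv]
  refine hPc.mem_of_tendsto hseg ((hnorm.eventually_ge_atTop t).mono fun m hm => ?_)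
  exact hPconv.add_smul_sub_mem hp (hxP _)
    ⟨div_nonneg ht (norm_nonneg _), div_le_one_of_le₀ hm (norm_nonneg _)⟩

theorem IsPolyhedron.isClosed {d : ℕ} {P : Set (Fin d → ℝ)} (hP : IsPolyhedron P) :
    IsClosed P := by
  obtain ⟨k, A, b, rfl⟩ := hP
  simp only [Set.ofPred_forall]
  exact isClosed_iInter fun i => isClosed_le (by fun_prop) continuous_const

theorem IsPolyhedron.convex {d : ℕ} {P : Set (Fin d → ℝ)} (hP : IsPolyhedron P) : Convex ℝ P := by
  obtain ⟨k, A, b, rfl⟩ := hP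
  simp only [Set.ofPred_forall]
  refine convex_iInter fun i => convex_halfSpace_le ⟨fun x y => ?_, fun c x => ?_⟩ (b i)
  · simp [mul_add, Finset.sum_add_distrib]
  · simp [Finset.mul_sum, mul_left_comm]

theorem Convex.add_smul_sub_add_smul_sub_mem {E : Type*} [AddCommGroup E] [Module ℝ E] {s : Set E}
    (hs : Convex ℝ s) {x y z : E} (hx : x ∈ s) (hy : y ∈ s) (hz : z ∈ s) {a c : ℝ} (ha : 0 ≤ a)
    (hc : 0 ≤ c) (hac : a + c ≤ 1) : x + a • (y - x) + c • (z - x) ∈ s := by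
  have h := hs.sum_mem (t := Finset.univ) (w := ![1 - a - c, a, c]) (z := ![x, y, z])
    (by simp [Fin.forall_fin_succ, ha, hc]; linarith) (by simp [Fin.sum_univ_three]; ring)
    (by simp [Fin.forall_fin_succ, hx, hy, hz])
  convert h using 1
  simp [Fin.sum_univ_three]
  module

theorem norm_add_smul_add_smul_le {E : Type*} [SeminormedAddCommGroup E] [NormedSpace ℝ E]
    (x y z : E) {a c : ℝ} (ha₀ : 0 ≤ a) (ha₁ : a ≤ 1) (hc₀ : 0 ≤ c) (hc₁ : c ≤ 1) :
    ‖x + a • y + c • z‖ ≤ ‖x‖ + ‖y‖ + ‖z‖ := calc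
  ‖x + a • y + c • z‖ ≤ ‖x‖ + ‖a • y‖ + ‖c • z‖ := norm_add₃_le
  _ ≤ ‖x‖ + ‖y‖ + ‖z‖ := by
    rw [norm_smul, norm_smul, Real.norm_of_nonneg ha₀, Real.norm_of_nonneg hc₀]
    gcongr
    · exact mul_le_of_le_one_left (norm_nonneg y) ha₁
    · exact mul_le_of_le_one_left (norm_nonneg z) hc₁

@[simp] theorem ZtoR_zero {d : ℕ} : ZtoR (0 : Fin d → ℤ) = 0 := by
  funext i; simp [ZtoR]

@[simp] theorem ZtoR_add {d : ℕ} (x y : Fin d → ℤ) : ZtoR (x + y) = ZtoR x + ZtoR y := by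
  funext i; simp [ZtoR]

@[simp] theorem ZtoR_sub {d : ℕ} (x y : Fin d → ℤ) : ZtoR (x - y) = ZtoR x - ZtoR y := by
  funext i; simp [ZtoR]

@[simp] theorem ZtoR_neg {d : ℕ} (x : Fin d → ℤ) : ZtoR (-x) = -ZtoR x := by
  funext i; simp [ZtoR]

@[simp] theorem ZtoR_zsmul {d : ℕ} (n : ℤ) (x : Fin d → ℤ) :
    ZtoR (n • x) = (n : ℝ) • ZtoR x := by
  funext i; simp [ZtoR]

theorem span_range_ZtoR (d : ℕ) : Submodule.span ℝ (Set.range (ZtoR (d := d))) = ⊤ := by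
  rw [eq_top_iff, ← (Pi.basisFun ℝ (Fin d)).span_eq]
  refine Submodule.span_mono (Set.range_subset_iff.mpr fun j => ⟨Pi.single j 1, ?_⟩)
  funext i
  by_cases h : i = j <;> simp [ZtoR, h]

theorem exists_pos_smul_sub_ZtoR_mem {d : ℕ} (W : Submodule ℝ (Fin d → ℝ))
    (hW : d ≤ finrank ℝ W + 1) (r : Fin d → ℝ) :
    ∃ c : ℝ, 0 < c ∧ ∃ q : Fin d → ℤ, c • r - ZtoR q ∈ W := by
  by_cases hr : r ∈ W
  · exact ⟨1, one_pos, 0, by simpa using hr⟩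
  have htop : W ⊔ ℝ ∙ r = ⊤ := by
    have hlt : W < W ⊔ ℝ ∙ r := left_lt_sup.mpr fun h =>
      hr (h (Submodule.mem_span_singleton_self r))
    have h₁ := Submodule.finrank_lt_finrank_of_lt hlt
    have h₂ := Submodule.finrank_le (W ⊔ ℝ ∙ r)
    rw [Module.finrank_fin_fun] at h₂
    exact Submodule.eq_top_of_finrank_eq (by rw [Module.finrank_fin_fun]; omega)
  obtain ⟨q₀, hq₀⟩ : ∃ q₀ : Fin d → ℤ, ZtoR q₀ ∉ W := by
    by_contra! h
    have hWtop : ⊤ ≤ W := by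
      rw [← span_range_ZtoR d, Submodule.span_le]
      exact Set.range_subset_iff.mpr h
    exact hr (hWtop Submodule.mem_top)
  obtain ⟨w, hw, y, hy, hwy⟩ :=
    Submodule.mem_sup.mp (htop ▸ Submodule.mem_top : ZtoR q₀ ∈ W ⊔ ℝ ∙ r)
  obtain ⟨s, rfl⟩ := Submodule.mem_span_singleton.mp hy
  have hs : s ≠ 0 := by rintro rfl; exact hq₀ (by simpa [← hwy] using hw)
  rcases hs.lt_or_gt with hs | hs
  · refine ⟨-s, neg_pos.mpr hs, -q₀, ?_⟩
    have : -s • r - ZtoR (-q₀) = w := by rw [ZtoR_neg, ← hwy]; module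
    exact this ▸ hw
  · refine ⟨s, hs, q₀, ?_⟩
    have : s • r - ZtoR q₀ = -w := by rw [← hwy]; module
    exact this ▸ W.neg_mem hw

theorem exists_two_le_finrank_span_pair {V : Type*} [AddCommGroup V] [Module ℝ V]
    [FiniteDimensional ℝ V] {T : Set V} (hT : 2 ≤ finrank ℝ (Submodule.span ℝ T)) :
    ∃ u ∈ T, ∃ w ∈ T, 2 ≤ finrank ℝ (Submodule.span ℝ {u, w}) := by
  obtain ⟨u, hu, hu0⟩ : ∃ u ∈ T, u ≠ 0 := by
    by_contra! h
    rw [(Submodule.span_eq_bot).mpr h, finrank_bot] at hT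
    omega
  obtain ⟨w, hw, hwu⟩ : ∃ w ∈ T, w ∉ ℝ ∙ u := by
    by_contra! h
    have := Submodule.finrank_mono ((Submodule.span_le).mpr h)
    rw [finrank_span_singleton hu0] at this
    omega
  refine ⟨u, hu, w, hw, ?_⟩
  have hlt : ℝ ∙ u < Submodule.span ℝ {u, w} :=
    (SetLike.lt_iff_le_and_exists).mpr ⟨Submodule.span_mono (by simp),
      w, Submodule.subset_span (by simp), hwu⟩
  have := Submodule.finrank_lt_finrank_of_lt hlt
  rw [finrank_span_singleton hu0] at this
  omega

theorem exists_triangle_of_two_le_dimX {d : ℕ} {X : Set (Fin d → ℤ)} (hX : 2 ≤ dimX X) :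
    ∃ p₀ ∈ X, ∃ p₁ ∈ X, ∃ p₂ ∈ X,
      2 ≤ finrank ℝ (Submodule.span ℝ {ZtoR p₁ - ZtoR p₀, ZtoR p₂ - ZtoR p₀}) := by
  obtain ⟨p₀, hp₀⟩ : X.Nonempty := by
    by_contra! h
    rw [dimX, h, Set.image_empty, AffineSubspace.span_empty, AffineSubspace.direction_bot,
      finrank_bot] at hX
    omega
  rw [dimX, direction_affineSpan,
    vectorSpan_eq_span_vsub_set_right ℝ (Set.mem_image_of_mem ZtoR hp₀), Set.image_image] at hX
  obtain ⟨_, ⟨p₁, hp₁, rfl⟩, _, ⟨p₂, hp₂, rfl⟩, h⟩ := exists_two_le_finrank_span_pair hX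
  exact ⟨p₀, hp₀, p₁, hp₁, p₂, hp₂, h⟩

theorem infinite_setOf_ZtoR_mem_of_recession {d : ℕ} {P : Set (Fin d → ℝ)} (hP : Convex ℝ P)
    {r : Fin d → ℝ} (hr : r ≠ 0) (hrec : ∀ x ∈ P, ∀ t : ℝ, 0 ≤ t → x + t • r ∈ P)
    {p₀ p₁ p₂ q : Fin d → ℤ} (hp₀ : ZtoR p₀ ∈ P) (hp₁ : ZtoR p₁ ∈ P) (hp₂ : ZtoR p₂ ∈ P)
    (hq : r - ZtoR q ∈ Submodule.span ℝ {ZtoR p₁ - ZtoR p₀, ZtoR p₂ - ZtoR p₀}) :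
    {z | ZtoR z ∈ P}.Infinite := by
  obtain ⟨α, β, hαβ⟩ := Submodule.mem_span_pair.mp hq
  set v₁ := ZtoR p₁ - ZtoR p₀
  set v₂ := ZtoR p₂ - ZtoR p₀
  set a : ℕ → ℝ := fun n => ⌈n * α⌉ - n * α
  set c : ℕ → ℝ := fun n => ⌈n * β⌉ - n * β
  set F : ℕ → Fin d → ℤ := fun n =>
    p₀ + ⌈n * α⌉ • (p₁ - p₀) + ⌈n * β⌉ • (p₂ - p₀) + (n : ℤ) • q
  have hF : ∀ n, ZtoR (F n) = (ZtoR p₀ + a n • v₁ + c n • v₂) + (n : ℝ) • r := fun n => by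
    have hr' : r = α • v₁ + β • v₂ + ZtoR q := by rw [hαβ]; abel
    simp only [F, a, c, ZtoR_add, ZtoR_sub, ZtoR_zsmul, hr']
    push_cast
    module
  have ha : ∀ n, 0 ≤ a n ∧ a n ≤ 1 := fun n =>
    ⟨sub_nonneg.mpr (Int.le_ceil _), by linarith [Int.ceil_lt_add_one (n * α)]⟩
  have hc : ∀ n, 0 ≤ c n ∧ c n ≤ 1 := fun n =>
    ⟨sub_nonneg.mpr (Int.le_ceil _), by linarith [Int.ceil_lt_add_one (n * β)]⟩
  set C := ‖ZtoR p₀‖ + ‖v₁‖ + ‖v₂‖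
  have hC : ∀ n, ‖ZtoR p₀ + a n • v₁ + c n • v₂‖ ≤ C := fun n =>
    norm_add_smul_add_smul_le _ _ _ (ha n).1 (ha n).2 (hc n).1 (hc n).2
  intro hfin
  obtain ⟨R, hR⟩ := isBounded_iff_forall_norm_le.mp (hfin.image ZtoR).isBounded
  obtain ⟨N, hN⟩ := exists_nat_gt ((R + C) / ‖r‖)
  obtain ⟨n, hNn, hn⟩ := exists_nat_ge_ceil_sub_add_ceil_sub_le_one α β N
  have hmem : ZtoR (F n) ∈ P := hF n ▸ hrec _ (hP.add_smul_sub_add_smul_sub_mem hp₀ hp₁ hp₂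
    (ha n).1 (hc n).1 hn) _ n.cast_nonneg
  have hn : (n : ℝ) * ‖r‖ ≤ R + C := calc
    (n : ℝ) * ‖r‖ = ‖ZtoR (F n) - (ZtoR p₀ + a n • v₁ + c n • v₂)‖ := by
      rw [hF, add_sub_cancel_left, norm_smul, Real.norm_natCast]
    _ ≤ ‖ZtoR (F n)‖ + ‖ZtoR p₀ + a n • v₁ + c n • v₂‖ := norm_sub_le _ _
    _ ≤ R + C := add_le_add (hR _ ⟨F n, hmem, rfl⟩) (hC n)
  rw [div_lt_iff₀ (norm_pos_iff.mpr hr)] at hN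
  nlinarith [(Nat.cast_le (α := ℝ)).mpr hNn, norm_nonneg r]

theorem relaxation_bounded_dim3_general (X : Set (Fin 3 → ℤ)) (hfin : X.Finite)
    (hdim : 2 ≤ dimX X)
    (P : Set (Fin 3 → ℝ)) (hP : IsPolyhedron P)
    (hrel : {z : Fin 3 → ℤ | ZtoR z ∈ P} = X) :
    Bornology.IsBounded P := by
  by_contra hub
  obtain ⟨r, hr, hrec⟩ := exists_recession_dir_of_not_isBounded hP.isClosed hP.convex hub
  obtain ⟨p₀, hp₀, p₁, hp₁, p₂, hp₂, hspan⟩ := exists_triangle_of_two_le_dimX hdim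
  obtain ⟨c, hc, q, hq⟩ := exists_pos_smul_sub_ZtoR_mem
    (Submodule.span ℝ {ZtoR p₁ - ZtoR p₀, ZtoR p₂ - ZtoR p₀}) (by omega) r
  have hX : ∀ p ∈ X, ZtoR p ∈ P := fun p hp => by rw [← hrel] at hp; exact hp
  refine infinite_setOf_ZtoR_mem_of_recession hP.convex (smul_ne_zero hc.ne' hr)
    (fun x hx t ht => ?_) (hX p₀ hp₀) (hX p₁ hp₁) (hX p₂ hp₂) hq (hrel ▸ hfin)
  rw [smul_smul]
  exact hrec x hx _ (mul_nonneg ht hc.le)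

/-- For a finite lattice-convex set `X ⊆ ℤ³` with `dim(X) ≥ 2`,
every polyhedral relaxation of `X` is bounded. -/
theorem relaxation_bounded_dim3 (X : Set (Fin 3 → ℤ)) (hfin : X.Finite)
    (hlc : IsLatticeConvex X) (hdim : 2 ≤ dimX X)
    (P : Set (Fin 3 → ℝ)) (hP : IsPolyhedron P)
    (hrel : {z : Fin 3 → ℤ | ZtoR z ∈ P} = X) :
    Bornology.IsBounded P :=
  relaxation_bounded_dim3_general X hfin hdim P hP hrel
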